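/- arXiv:0811.2267 — 5 statements merged into one kernel-verified Lean document; each statement's English description precedes it below -/
import Mathlib

section
/- Let V and V′ be two isomorphic modules over the Clifford algebra Cl_{−k} (k ≥ 1, generators e₁,…,e_k with e_i² = 1, e_i e_j = −e_j e_i for i ≠ j), with a module isomorphism γ : V → V′ and grading involutions ε on V and V′ (where each of V, V′ carries a ℤ/2-grading making it a graded Cl_{−k}-module). On the ℤ/2-graded vector space W = V ⊕ V′ (with even part V and odd part V′), the operators e′_i defined by e′_i = ε e_i γ on V and e′_i = −ε e_i γ^{-1} on V′ for 1 ≤ i ≤ k, together with e′_{k+1} defined by γ on V and γ^{-1} on V′, satisfy (e′_i)² = 1 for all 1 ≤ i ≤ k+1, e′_i e′_j = −e′_j e′_i for i < j, and each e′_i reverses parity on W. Hence they generate a graded Cl_{−(k+1)}-action on W. -/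
/-!
Transport everything to `V` through `γ`. With `Mᵢ = ε eᵢ`, the oddness of `eᵢ` gives
`Mᵢ² = -1` and `Mᵢ Mⱼ = -Mⱼ Mᵢ` for `i ≠ j`. On `W ≅ V ⊕ V` the new generators are
`eᵢ′ = Mᵢ ⊗ J` and `e′_{k+1} = 1 ⊗ σ` with `J = [[0,-1],[1,0]]`, `σ = [[0,1],[1,0]]`;
since `J² = -1`, `σ² = 1` and `Jσ = -σJ`, these square to `1` and anticommute.
-/

section Ring

variable {A : Type*} [Ring A] {ε a b : A}

theorem mul_mul_mul_eq_neg_of_anticomm (hε : ε * ε = 1) (hεa : ε * a = -(a * ε)) :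
    ε * a * (ε * b) = -(a * b) := by
  calc ε * a * (ε * b) = ε * (a * ε) * b := by noncomm_ring
    _ = -(ε * ε * a * b) := by rw [← neg_neg (a * ε), ← hεa]; noncomm_ring
    _ = -(a * b) := by rw [hε, one_mul]

theorem mul_mul_self_eq_neg_one_of_anticomm (hε : ε * ε = 1) (ha : a * a = 1)
    (hεa : ε * a = -(a * ε)) : ε * a * (ε * a) = -1 := by
  rw [mul_mul_mul_eq_neg_of_anticomm hε hεa, ha]

theorem mul_mul_anticomm_of_anticomm (hε : ε * ε = 1) (hεa : ε * a = -(a * ε))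
    (hεb : ε * b = -(b * ε)) (hab : a * b = -(b * a)) :
    ε * a * (ε * b) = -(ε * b * (ε * a)) := by
  rw [mul_mul_mul_eq_neg_of_anticomm hε hεa, mul_mul_mul_eq_neg_of_anticomm hε hεb, hab]

end Ring

namespace CliffordExtension

variable {R V V' : Type*} [Semiring R] [AddCommGroup V] [Module R V] [AddCommGroup V'] [Module R V']

def offDiag (γ : V ≃ₗ[R] V') (A B : Module.End R V) (p : V × V') : V × V' :=
  (A (γ.symm p.2), γ (B p.1))

variable (γ : V ≃ₗ[R] V') {A B C D : Module.End R V}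

theorem offDiag_offDiag (p : V × V') :
    offDiag γ A B (offDiag γ C D p) = ((A * D) p.1, γ ((B * C) (γ.symm p.2))) := by
  simp [offDiag]

theorem offDiag_offDiag_self (hAB : A * B = 1) (hBA : B * A = 1) (p : V × V') :
    offDiag γ A B (offDiag γ A B p) = p := by
  simp [offDiag_offDiag, hAB, hBA]

theorem offDiag_anticomm (hAD : A * D = -(C * B)) (hBC : B * C = -(D * A)) (p : V × V') :
    offDiag γ A B (offDiag γ C D p) = -offDiag γ C D (offDiag γ A B p) := by
  simp [offDiag_offDiag, hAD, hBC]

theorem offDiag_neg_snd (p : V × V') :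
    offDiag γ A B (p.1, -p.2) = (-(offDiag γ A B p).1, (offDiag γ A B p).2) := by
  simp [offDiag]

variable {k : ℕ} (ε : Module.End R V) (e : Fin k → Module.End R V)

def generator (i : Fin (k + 1)) : V × V' → V × V' :=
  Fin.lastCases (offDiag γ 1 1) (fun i => offDiag γ (-(ε * e i)) (ε * e i)) i

@[simp]
theorem generator_castSucc (i : Fin k) :
    generator γ ε e i.castSucc = offDiag γ (-(ε * e i)) (ε * e i) :=
  Fin.lastCases_castSucc ..

@[simp]
theorem generator_last : generator γ ε e (Fin.last k) = offDiag γ 1 1 :=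
  Fin.lastCases_last

theorem generator_neg_snd (i : Fin (k + 1)) (p : V × V') :
    generator γ ε e i (p.1, -p.2) = (-(generator γ ε e i p).1, (generator γ ε e i p).2) := by
  induction i using Fin.lastCases <;> simp [offDiag_neg_snd]

variable {ε e} (hε : ε * ε = 1) (hodd : ∀ i, ε * e i = -(e i * ε))
include hε hodd

theorem generator_generator_self (he : ∀ i, e i * e i = 1) (i : Fin (k + 1)) (p : V × V') :
    generator γ ε e i (generator γ ε e i p) = p := by
  induction i using Fin.lastCases with
  | last => simp [offDiag_offDiag_self]
  | cast i =>
    have hsq := mul_mul_self_eq_neg_one_of_anticomm hε (he i) (hodd i)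
    simp [offDiag_offDiag_self, hsq]

theorem generator_anticomm (hanti : ∀ i j, i ≠ j → e i * e j = -(e j * e i))
    {i j : Fin (k + 1)} (hij : i ≠ j) (p : V × V') :
    generator γ ε e i (generator γ ε e j p) = -generator γ ε e j (generator γ ε e i p) := by
  induction i using Fin.lastCases with
  | last =>
    induction j using Fin.lastCases with
    | last => exact absurd rfl hij
    | cast j => simpa using offDiag_anticomm γ (by simp) (by simp) p
  | cast i =>
    induction j using Fin.lastCases with
    | last => simpa using offDiag_anticomm γ (by simp) (by simp) p
    | cast j =>
      have hM := mul_mul_anticomm_of_anticomm hε (hodd i) (hodd j)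
        (hanti i j fun h => hij (congrArg _ h))
      simpa using offDiag_anticomm γ (by simp [hM]) (by simp [hM]) p

end CliffordExtension

open CliffordExtension in
theorem extend_clifford_action_one_more_generator_general
    {V V' : Type*} [AddCommGroup V] [Module ℝ V] [AddCommGroup V'] [Module ℝ V']
    (k : ℕ)
    (e : Fin k → Module.End ℝ V) (e' : Fin k → Module.End ℝ V')
    (εV : Module.End ℝ V) (εV' : Module.End ℝ V')
    (γ : V ≃ₗ[ℝ] V')
    (hεV : ∀ v, εV (εV v) = v)
    (he2 : ∀ i v, e i (e i v) = v)
    (hanti : ∀ i j, i ≠ j → ∀ v, e i (e j v) = - e j (e i v))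
    (hodd : ∀ i v, εV (e i v) = - e i (εV v))
    (hγe : ∀ i v, γ (e i v) = e' i (γ v))
    (hγε : ∀ v, γ (εV v) = εV' (γ v)) :
    ∃ f : Fin (k + 1) → (V × V') → (V × V'),
      -- the defining formulas
      (∀ i : Fin k, ∀ p : V × V',
        f i.castSucc p = (- εV (e i (γ.symm p.2)), εV' (e' i (γ p.1)))) ∧
      (∀ p : V × V', f (Fin.last k) p = (γ.symm p.2, γ p.1)) ∧
      -- `(e′_i)² = 1`
      (∀ i p, f i (f i p) = p) ∧
      -- anticommutation for `i < j`
      (∀ i j, i < j → ∀ p, f i (f j p) = - f j (f i p)) ∧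
      -- each `e′_i` is odd with respect to the grading of `W` (even part `V`)
      (∀ i, ∀ p : V × V', f i (p.1, -p.2) = (-(f i p).1, (f i p).2)) := by
  have hε : εV * εV = 1 := LinearMap.ext hεV
  have hεe : ∀ i, εV * e i = -(e i * εV) := fun i => LinearMap.ext (hodd i)
  refine ⟨generator γ εV e, fun i p => ?_, fun p => by simp [offDiag], ?_, ?_,
    generator_neg_snd γ εV e⟩
  · simp [offDiag, hγe, hγε]
  · exact generator_generator_self γ hε hεe fun i => LinearMap.ext (he2 i)
  · exact fun i j hij => generator_anticomm γ hε hεe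
      (fun i j hij => LinearMap.ext (hanti i j hij)) hij.ne

/-- Given isomorphic graded `Cl_{−k}`-modules `V ≅ V′` (generators `e_i` with
`e_i² = 1`, anticommuting, odd) with module isomorphism `γ` commuting with the
generators and gradings, the operators `e′_i = ε e_i γ` on `V`, `−ε e_i γ⁻¹` on
`V′` (for `i ≤ k`) and `e′_{k+1} = γ` on `V`, `γ⁻¹` on `V′`, define odd operators
on `W = V ⊕ V′` (even part `V`, odd part `V′`) satisfying `(e′_i)² = 1` and
`e′_i e′_j = −e′_j e′_i` for `i < j`: a graded `Cl_{−(k+1)}`-action. -/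
theorem extend_clifford_action_one_more_generator
    {V V' : Type*} [AddCommGroup V] [Module ℝ V] [AddCommGroup V'] [Module ℝ V']
    (k : ℕ) (hk : 1 ≤ k)
    (e : Fin k → Module.End ℝ V) (e' : Fin k → Module.End ℝ V')
    (εV : Module.End ℝ V) (εV' : Module.End ℝ V')
    (γ : V ≃ₗ[ℝ] V')
    (hεV : ∀ v, εV (εV v) = v) (hεV' : ∀ v, εV' (εV' v) = v)
    (he2 : ∀ i v, e i (e i v) = v) (he2' : ∀ i v, e' i (e' i v) = v)
    (hanti : ∀ i j, i ≠ j → ∀ v, e i (e j v) = - e j (e i v))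
    (hanti' : ∀ i j, i ≠ j → ∀ v, e' i (e' j v) = - e' j (e' i v))
    (hodd : ∀ i v, εV (e i v) = - e i (εV v))
    (hodd' : ∀ i v, εV' (e' i v) = - e' i (εV' v))
    (hγe : ∀ i v, γ (e i v) = e' i (γ v))
    (hγε : ∀ v, γ (εV v) = εV' (γ v)) :
    ∃ f : Fin (k + 1) → (V × V') → (V × V'),
      -- the defining formulas
      (∀ i : Fin k, ∀ p : V × V',
        f i.castSucc p = (- εV (e i (γ.symm p.2)), εV' (e' i (γ p.1)))) ∧
      (∀ p : V × V', f (Fin.last k) p = (γ.symm p.2, γ p.1)) ∧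
      -- `(e′_i)² = 1`
      (∀ i p, f i (f i p) = p) ∧
      -- anticommutation for `i < j`
      (∀ i j, i < j → ∀ p, f i (f j p) = - f j (f i p)) ∧
      -- each `e′_i` is odd with respect to the grading of `W` (even part `V`)
      (∀ i, ∀ p : V × V', f i (p.1, -p.2) = (-(f i p).1, (f i p).2)) :=
  extend_clifford_action_one_more_generator_general k e e' εV εV' γ hεV he2 hanti hodd hγe hγε
end

section
/- Let W be a ℤ/2-graded Cl_n-module (n ≥ 0) with grading involution ε and generators e₁,…,e_n acting as odd operators. Suppose W decomposes as W = A ⊕ εA with A a Cl_n-submodule (an ungraded submodule: e_i(A) ⊆ A) and A ∩ εA = 0. Define e_{n+1} : W → W by e_{n+1} = −ε on A and e_{n+1} = ε on εA. Then e_{n+1} is odd (anticommutes with ε), satisfies e_{n+1}² = e_i², as required by the Cl_{n+1} relations, and anticommutes with e₁,…,e_n; hence the graded Cl_n-action on W extends to a graded Cl_{n+1}-action. -/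
/-- If a graded `Cl_n`-module `W` (generators `e_i` odd with `e_i² = −1`,
anticommuting) decomposes as `W = A ⊕ εA` with `A` an ungraded `Cl_n`-submodule
and `A ∩ εA = 0`, then the operator `e_{n+1}` defined as `−ε` on `A` and `ε` on
`εA` is linear, odd, squares to `−1`, and anticommutes with `e₁,…,e_n`; hence
the graded `Cl_n`-action extends to a graded `Cl_{n+1}`-action. -/
theorem extend_graded_clifford_action_via_A
    {W : Type*} [AddCommGroup W] [Module ℝ W] (n : ℕ)
    (ε : Module.End ℝ W) (e : Fin n → Module.End ℝ W)
    (hε : ∀ w, ε (ε w) = w)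
    (he2 : ∀ i w, e i (e i w) = -w)
    (hanti : ∀ i j, i ≠ j → ∀ w, e i (e j w) = - e j (e i w))
    (hodd : ∀ i w, ε (e i w) = - e i (ε w))
    (A : Submodule ℝ W)
    (hAinv : ∀ i, ∀ a ∈ A, e i a ∈ A)
    (hint : ∀ x ∈ A, ε x ∈ A → x = 0)
    (hsum : ∀ w : W, ∃ a ∈ A, ∃ b ∈ A, w = a + ε b) :
    ∃ f : Module.End ℝ W,
      (∀ a ∈ A, f a = - ε a) ∧
      (∀ a ∈ A, f (ε a) = a) ∧
      (∀ w, f (f w) = -w) ∧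
      (∀ w, ε (f w) = - f (ε w)) ∧
      (∀ i w, f (e i w) = - e i (f w)) := by
  set B : Submodule ℝ W := A.map ε with hB
  have hcompl : IsCompl A B := by
    constructor
    · rw [disjoint_iff]
      ext x
      simp only [Submodule.mem_inf, Submodule.mem_bot]
      constructor
      · rintro ⟨hxA, hxB⟩
        rcases hxB with ⟨a, haA, rfl⟩
        have h2 : ε (ε a) ∈ A := by rw [hε]; exact haA
        exact hint _ hxA h2
      · rintro rfl; exact ⟨A.zero_mem, B.zero_mem⟩
    · rw [codisjoint_iff]
      rw [eq_top_iff]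
      intro w _
      obtain ⟨a, ha, b, hb, rfl⟩ := hsum w
      exact Submodule.add_mem_sup ha ⟨b, hb, rfl⟩
  set π := A.linearProjOfIsCompl B hcompl with hπ
  set f : Module.End ℝ W := ε ∘ₗ (LinearMap.id - (2 : ℝ) • (A.subtype ∘ₗ π)) with hf
  have key : ∀ a ∈ A, ∀ b ∈ A, f (a + ε b) = b - ε a := by
    intro a ha b hb
    have h1 : π a = ⟨a, ha⟩ := Submodule.linearProjOfIsCompl_apply_left hcompl ⟨a, ha⟩
    have h2 : π (ε b) = 0 :=
      Submodule.linearProjOfIsCompl_apply_right hcompl ⟨ε b, ⟨b, hb, rfl⟩⟩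
    simp only [hf, LinearMap.comp_apply, LinearMap.sub_apply, LinearMap.id_apply,
      LinearMap.smul_apply, map_add, h1, h2, add_zero, Submodule.coe_subtype]
    simp only [map_sub, map_smul, map_zero, hε, ZeroMemClass.coe_zero, smul_zero, sub_zero]
    module
  have fa : ∀ a ∈ A, f a = - ε a := by
    intro a ha
    have := key a ha 0 A.zero_mem
    simpa using this
  have fb : ∀ a ∈ A, f (ε a) = a := by
    intro a ha
    have := key 0 A.zero_mem a ha
    simpa using this
  refine ⟨f, fa, fb, ?_, ?_, ?_⟩
  · intro w
    obtain ⟨a, ha, b, hb, rfl⟩ := hsum w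
    rw [key a ha b hb]
    have : b - ε a = b + ε (-a) := by rw [map_neg]; abel
    rw [this, key b hb (-a) (A.neg_mem ha)]
    abel
  · intro w
    obtain ⟨a, ha, b, hb, rfl⟩ := hsum w
    rw [key a ha b hb]
    have hεw : ε (a + ε b) = b + ε a := by rw [map_add, hε]; abel
    rw [hεw, key b hb a ha, map_sub, hε]
    abel
  · intro i w
    obtain ⟨a, ha, b, hb, rfl⟩ := hsum w
    rw [key a ha b hb]
    have h1 : e i (a + ε b) = e i a + ε (-(e i b)) := by
      rw [map_add, map_neg]
      have h2 : e i (ε b) = - ε (e i b) := by rw [hodd i b, neg_neg]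
      rw [h2]
    rw [h1, key (e i a) (hAinv i a ha) (-(e i b)) (A.neg_mem (hAinv i b hb))]
    rw [show (b - ε a) = b + (- ε a) by abel, map_add, map_neg, hodd i a]
    abel
end

section
/- Let H be a Hilbert space, F and F₁ self-adjoint operators, c > 0 and 0 < ε < 1 with ‖F − F₁‖ < cε. Suppose u is a unit eigenvector of F₁ with eigenvalue λ, |λ| < c, and u = u′ + u″ where u′ lies in an F-invariant closed subspace V_F, u″ ⊥ V_F, and ‖F(w)‖ ≥ 3c‖w‖ for all w ⊥ V_F, while V_F and its orthogonal complement are both F-invariant. Then ‖u″‖ < ε/2. -/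
/-! The residual `F u - λ u` of the approximate eigenvector `u` equals `(F - F₁) u`, so its norm
is below `cε`. Since `F` preserves `V` and `Vᗮ`, that residual splits orthogonally, and its
`Vᗮ`-part `F u″ - λ u″` is at least `(3c - |λ|)‖u″‖ > 2c‖u″‖` in norm. -/

section

variable {𝕜 E : Type*} [RCLike 𝕜] [NormedAddCommGroup E] [InnerProductSpace 𝕜 E]

theorem norm_le_norm_add_of_mem_of_mem_orthogonal {V : Submodule 𝕜 E} {x y : E}
    (hx : x ∈ V) (hy : y ∈ Vᗮ) : ‖y‖ ≤ ‖x + y‖ := by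
  have hxy := norm_add_sq_eq_norm_sq_add_norm_sq_of_inner_eq_zero x y
    (Submodule.inner_right_of_mem_orthogonal hx hy)
  exact (sq_le_sq₀ (norm_nonneg _) (norm_nonneg _)).1 (by nlinarith [sq_nonneg ‖x‖])

theorem norm_apply_sub_smul_le_of_mem_orthogonal (F : E →L[𝕜] E) (a : 𝕜)
    {V : Submodule 𝕜 E} {x y : E} (hx : x ∈ V) (hFx : F x ∈ V) (hy : y ∈ Vᗮ)
    (hFy : F y ∈ Vᗮ) : ‖F y - a • y‖ ≤ ‖F (x + y) - a • (x + y)‖ := by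
  have hsplit : F (x + y) - a • (x + y) = (F x - a • x) + (F y - a • y) := by
    simp only [map_add, smul_add]
    abel
  rw [hsplit]
  exact norm_le_norm_add_of_mem_of_mem_orthogonal (V.sub_mem hFx (V.smul_mem a hx))
    (Vᗮ.sub_mem hFy (Vᗮ.smul_mem a hy))

end

section

variable {𝕜 E : Type*} [NontriviallyNormedField 𝕜] [SeminormedAddCommGroup E] [NormedSpace 𝕜 E]

theorem norm_apply_sub_smul_le_of_apply_eq_smul {F F₁ : E →L[𝕜] E} {a : 𝕜} {u : E}
    (hu : F₁ u = a • u) : ‖F u - a • u‖ ≤ ‖F - F₁‖ * ‖u‖ := by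
  rw [← hu, ← sub_apply]
  exact (F - F₁).le_opNorm u

theorem sub_norm_smul_le_norm_apply_sub_smul (F : E → E) {K : ℝ} {a : 𝕜} {w : E}
    (hw : K * ‖w‖ ≤ ‖F w‖) : (K - ‖a‖) * ‖w‖ ≤ ‖F w - a • w‖ := by
  have := norm_sub_norm_le (F w) (a • w)
  rw [norm_smul] at this
  linarith

end

theorem eigenvector_close_to_spectral_subspace_general
    {H : Type*} [NormedAddCommGroup H] [InnerProductSpace ℝ H]
    (F F₁ : H →L[ℝ] H) (c eps : ℝ)
    (hc : 0 < c)
    (hFF₁ : ‖F - F₁‖ < c * eps)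
    (u u' u'' : H) (hu : ‖u‖ = 1)
    (lam : ℝ) (heig : F₁ u = lam • u) (hlam : |lam| < c)
    (V : Submodule ℝ H)
    (hdecomp : u = u' + u'')
    (hu' : u' ∈ V)
    (hu'' : ∀ v ∈ V, (inner ℝ u'' v : ℝ) = 0)
    (hFV : ∀ v ∈ V, F v ∈ V)
    (hFVperp : ∀ w : H, (∀ v ∈ V, (inner ℝ w v : ℝ) = 0) →
      (∀ v ∈ V, (inner ℝ (F w) v : ℝ) = 0))
    (hlower : ∀ w : H, (∀ v ∈ V, (inner ℝ w v : ℝ) = 0) → 3 * c * ‖w‖ ≤ ‖F w‖) :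
    ‖u''‖ < eps / 2 := by
  have hresidual : ‖F u - lam • u‖ < c * eps := by
    have := norm_apply_sub_smul_le_of_apply_eq_smul (F := F) heig
    rw [hu, mul_one] at this
    exact this.trans_lt hFF₁
  have hperp_le : ‖F u'' - lam • u''‖ ≤ ‖F u - lam • u‖ := by
    rw [hdecomp]
    exact norm_apply_sub_smul_le_of_mem_orthogonal F lam hu' (hFV u' hu')
      ((V.mem_orthogonal' u'').2 hu'') ((V.mem_orthogonal' _).2 (hFVperp u'' hu''))
  have hperp_ge : (3 * c - |lam|) * ‖u''‖ ≤ ‖F u'' - lam • u''‖ :=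
    sub_norm_smul_le_norm_apply_sub_smul F (a := lam) (hlower u'' hu'')
  nlinarith [norm_nonneg u'']

/-- Quantitative continuity of spectral subspaces: if `‖F − F₁‖ < cε`, `u` is a
unit eigenvector of `F₁` with eigenvalue `λ`, `|λ| < c`, and `u = u′ + u″` with
`u′` in an `F`-invariant subspace `V_F` (whose orthogonal complement is also
`F`-invariant and on which `‖F w‖ ≥ 3c‖w‖`), `u″ ⊥ V_F`, then `‖u″‖ < ε/2`. -/
theorem eigenvector_close_to_spectral_subspace
    {H : Type*} [NormedAddCommGroup H] [InnerProductSpace ℝ H]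
    (F F₁ : H →L[ℝ] H) (c eps : ℝ)
    (hc : 0 < c) (heps0 : 0 < eps) (heps1 : eps < 1)
    (hFF₁ : ‖F - F₁‖ < c * eps)
    (u u' u'' : H) (hu : ‖u‖ = 1)
    (lam : ℝ) (heig : F₁ u = lam • u) (hlam : |lam| < c)
    (V : Submodule ℝ H)
    (hdecomp : u = u' + u'')
    (hu' : u' ∈ V)
    (hu'' : ∀ v ∈ V, (inner ℝ u'' v : ℝ) = 0)
    (hFV : ∀ v ∈ V, F v ∈ V)
    (hFVperp : ∀ w : H, (∀ v ∈ V, (inner ℝ w v : ℝ) = 0) →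
      (∀ v ∈ V, (inner ℝ (F w) v : ℝ) = 0))
    (hlower : ∀ w : H, (∀ v ∈ V, (inner ℝ w v : ℝ) = 0) → 3 * c * ‖w‖ ≤ ‖F w‖) :
    ‖u''‖ < eps / 2 :=
  eigenvector_close_to_spectral_subspace_general F F₁ c eps hc hFF₁ u u' u'' hu lam heig hlam V
    hdecomp hu' hu'' hFV hFVperp hlower
end

section
/- Let H be a Hilbert space, H a self-adjoint operator on a closed subspace H′ (extended by 'H = +∞', i.e. the semigroup e^{−2πyH} vanishes, on H′^⊥), and y ↦ K(y), y > 0, a family of bounded operators satisfying K(y₂)e^{−2πy₁H} = K(y₁ + y₂) = e^{−2πy₂H}K(y₁) for all y₁, y₂ > 0 (where e^{−2πyH} denotes the semigroup, zero on H′^⊥). Then all K(y) commute with all e^{−2πy′H}, and setting G̃ = K(1)e^{2πH} (defined on H′), one has K(y) = G̃ e^{−2πyH} for all y > 1. -/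
section ShiftRelations

variable {M : Type*} [Semigroup M] {S K : ℝ → M}

theorem commute_of_mul_eq_shift_of_shift_eq_mul
    (hKS : ∀ y₁ y₂ : ℝ, 0 < y₁ → 0 < y₂ → K y₂ * S y₁ = K (y₁ + y₂))
    (hSK : ∀ y₁ y₂ : ℝ, 0 < y₁ → 0 < y₂ → S y₂ * K y₁ = K (y₁ + y₂))
    {y y' : ℝ} (hy : 0 < y) (hy' : 0 < y') :
    Commute (K y) (S y') := by
  calc K y * S y' = K (y' + y) := hKS y' y hy' hy
    _ = K (y + y') := by rw [add_comm]
    _ = S y' * K y := (hSK y y' hy hy').symm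

theorem eq_mul_of_mul_eq_of_lt
    (hS : ∀ y₁ y₂ : ℝ, 0 < y₁ → 0 < y₂ → S y₁ * S y₂ = S (y₁ + y₂))
    (hKS : ∀ y₁ y₂ : ℝ, 0 < y₁ → 0 < y₂ → K y₂ * S y₁ = K (y₁ + y₂))
    {G : M} {t y : ℝ} (ht : 0 < t) (hG : G * S t = K t) (hty : t < y) :
    K y = G * S y := by
  have hpos : 0 < y - t := sub_pos.mpr hty
  calc K y = K (y - t + t) := by rw [sub_add_cancel]
    _ = K t * S (y - t) := (hKS (y - t) t hpos ht).symm
    _ = G * (S t * S (y - t)) := by rw [← hG, mul_assoc]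
    _ = G * S (t + (y - t)) := by rw [hS t (y - t) ht hpos]
    _ = G * S y := by rw [add_sub_cancel]

end ShiftRelations

/-- Let `S y = e^{−2πyH}` (`y > 0`) be the semigroup generated by `H` (vanishing
on `H′^⊥`) and `K(y)` (`y > 0`) bounded operators with
`K(y₂)e^{−2πy₁H} = K(y₁+y₂) = e^{−2πy₂H}K(y₁)`. Then all `K(y)` commute with all
`e^{−2πy′H}`, and with `G̃ = K(1)e^{2πH}` (characterized by `G̃ e^{−2πH} = K(1)`)
one has `K(y) = G̃ e^{−2πyH}` for all `y > 1`. -/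
theorem susy_generator_from_semigroup_relation
    {H : Type*} [NormedAddCommGroup H] [InnerProductSpace ℝ H]
    (S K : ℝ → (H →L[ℝ] H))
    (hS : ∀ y₁ y₂ : ℝ, 0 < y₁ → 0 < y₂ → S y₁ * S y₂ = S (y₁ + y₂))
    (hKS : ∀ y₁ y₂ : ℝ, 0 < y₁ → 0 < y₂ → K y₂ * S y₁ = K (y₁ + y₂))
    (hSK : ∀ y₁ y₂ : ℝ, 0 < y₁ → 0 < y₂ → S y₂ * K y₁ = K (y₁ + y₂))
    (G : H →L[ℝ] H)
    (hG : G * S 1 = K 1) :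
    (∀ y y' : ℝ, 0 < y → 0 < y' → Commute (K y) (S y')) ∧
    (∀ y : ℝ, 1 < y → K y = G * S y) :=
  ⟨fun _ _ hy hy' => commute_of_mul_eq_shift_of_shift_eq_mul hKS hSK hy hy',
    fun _ hy => eq_mul_of_mul_eq_of_lt hS hKS one_pos hG hy⟩
end

section
/- Let H⁰ and H¹ be inner product spaces and suppose U⁰ ⊆ H⁰, U¹ ⊆ H¹ are finite-dimensional subspaces of a graded space H = H⁰ ⊕ H¹ with grading involution ε (ε = id on H⁰, ε = −id on H¹) such that U⁰ ⊥ U¹. Then the assignments φ ↦ A_φ := {u + φ(u) : u ∈ U⁰} and A ↦ φ_A (defined by φ_A(a + εa) = a − εa) are mutually inverse bijections between the set of isometric isomorphisms φ : U⁰ → U¹ and the set of subspaces A ⊆ U⁰ ⊕ U¹ satisfying A ⊥ εA and U⁰ ⊕ U¹ = A ⊕ εA. -/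
/-!
On `U₀ ⊕ U₁` the involution `ε` acts as `u + v ↦ u - v`, so `p a = (a + ε a) / 2` and
`q a = (a - ε a) / 2` are the `U₀`- and `U₁`-components of `a`. If `A ⊥ ε A`, both `p` and `q`
scale inner products on `A` by `1/2`, hence are injective, and `A + ε A = U₀ ⊕ U₁` makes them
onto; so `φ = q ∘ p⁻¹` is an isometry `U₀ → U₁`, and its graph is `A` because `p a + q a = a`.
The graph determines the map since `U₀ ∩ U₁ = 0`. Conversely the graph of an isometry is
orthogonal to its image under `ε`, as `⟪u + φ u, v - φ v⟫ = ⟪u, v⟫ - ⟪φ u, φ v⟫ = 0`.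
-/

open scoped RealInnerProductSpace

namespace LinearMap

variable {R M : Type*} [Ring R] [AddCommGroup M] [Module R M] {U₀ U₁ : Submodule R M}

/-- Unlike `LinearMap.graph`, this lives in `M` rather than in `U₀ × U₁`. -/
def ambientGraph (f : U₀ →ₗ[R] U₁) : Submodule R M :=
  range (U₀.subtype + U₁.subtype ∘ₗ f)

theorem mem_ambientGraph {f : U₀ →ₗ[R] U₁} {x : M} :
    x ∈ f.ambientGraph ↔ ∃ u : U₀, (u : M) + f u = x :=
  Iff.rfl

theorem add_mem_ambientGraph (f : U₀ →ₗ[R] U₁) (u : U₀) : (u : M) + f u ∈ f.ambientGraph :=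
  mem_ambientGraph.2 ⟨u, rfl⟩

theorem ambientGraph_le_sup (f : U₀ →ₗ[R] U₁) : f.ambientGraph ≤ U₀ ⊔ U₁ := by
  rintro _ ⟨u, rfl⟩
  exact Submodule.add_mem_sup u.2 (f u).2

theorem ambientGraph_injective (h : Disjoint U₀ U₁) :
    Function.Injective (ambientGraph : (U₀ →ₗ[R] U₁) → Submodule R M) := by
  intro f g hfg
  ext u
  obtain ⟨w, hw⟩ := mem_ambientGraph.1 (hfg ▸ add_mem_ambientGraph f u)
  have hsub : (u : M) - w = g w - f u := by
    linear_combination (norm := module) hw.symm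
  have hzero : (u : M) - w = 0 :=
    Submodule.disjoint_def.1 h _ (sub_mem u.2 w.2) (hsub ▸ sub_mem (g w).2 (f u).2)
  have huw : w = u := (Subtype.ext (sub_eq_zero.1 hzero)).symm
  subst huw
  exact (sub_eq_zero.1 (hsub ▸ hzero)).symm

theorem ambientGraph_comp_symm {A : Submodule R M} (p : A ≃ₗ[R] U₀) (q : A →ₗ[R] U₁)
    (hpq : ∀ a, (p a : M) + q a = a) : (q ∘ₗ p.symm.toLinearMap).ambientGraph = A := by
  ext x
  refine ⟨?_, fun hx => ⟨p ⟨x, hx⟩, by simpa using hpq ⟨x, hx⟩⟩⟩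
  rintro ⟨u, rfl⟩
  have h := hpq (p.symm u)
  rw [p.apply_symm_apply] at h
  change (u : M) + q (p.symm u) ∈ A
  exact h ▸ (p.symm u).2

end LinearMap

section Grading

variable {H : Type*} [NormedAddCommGroup H] [InnerProductSpace ℝ H] {ε : H ≃ₗᵢ[ℝ] H}
  {U₀ U₁ : Submodule ℝ H}

theorem map_add_eq_sub (hfix : ∀ u ∈ U₀, ε u = u) (hneg : ∀ u ∈ U₁, ε u = -u) {u v : H}
    (hu : u ∈ U₀) (hv : v ∈ U₁) : ε (u + v) = u - v := by
  rw [map_add, hfix u hu, hneg v hv, sub_eq_add_neg]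

theorem add_map_mem_of_mem_sup (hfix : ∀ u ∈ U₀, ε u = u) (hneg : ∀ u ∈ U₁, ε u = -u) {x : H}
    (hx : x ∈ U₀ ⊔ U₁) : x + ε x ∈ U₀ := by
  obtain ⟨u, hu, v, hv, rfl⟩ := Submodule.mem_sup.1 hx
  rw [map_add_eq_sub hfix hneg hu hv]
  convert U₀.smul_mem (2 : ℝ) hu using 1
  module

theorem sub_map_mem_of_mem_sup (hfix : ∀ u ∈ U₀, ε u = u) (hneg : ∀ u ∈ U₁, ε u = -u) {x : H}
    (hx : x ∈ U₀ ⊔ U₁) : x - ε x ∈ U₁ := by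
  obtain ⟨u, hu, v, hv, rfl⟩ := Submodule.mem_sup.1 hx
  rw [map_add_eq_sub hfix hneg hu hv]
  convert U₁.smul_mem (2 : ℝ) hv using 1
  module

theorem map_map_of_mem_sup (hfix : ∀ u ∈ U₀, ε u = u) (hneg : ∀ u ∈ U₁, ε u = -u) {x : H}
    (hx : x ∈ U₀ ⊔ U₁) : ε (ε x) = x := by
  obtain ⟨u, hu, v, hv, rfl⟩ := Submodule.mem_sup.1 hx
  rw [map_add_eq_sub hfix hneg hu hv, sub_eq_add_neg, map_add_eq_sub hfix hneg hu (neg_mem hv),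
    sub_neg_eq_add]

theorem inner_map_ambientGraph_eq_zero (hfix : ∀ u ∈ U₀, ε u = u) (hneg : ∀ u ∈ U₁, ε u = -u)
    (hperp : U₀ ⟂ U₁) (φ : U₀ →ₗᵢ[ℝ] U₁) {a b : H} (ha : a ∈ φ.toLinearMap.ambientGraph)
    (hb : b ∈ φ.toLinearMap.ambientGraph) : ⟪a, ε b⟫ = 0 := by
  obtain ⟨u, rfl⟩ := ha
  obtain ⟨v, rfl⟩ := hb
  change ⟪(u : H) + φ u, ε ((v : H) + φ v)⟫ = 0
  have huφv : ⟪(u : H), φ v⟫ = 0 := hperp.inner_eq u.2 (φ v).2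
  have hφuv : ⟪(φ u : H), v⟫ = 0 := by rw [real_inner_comm]; exact hperp.inner_eq v.2 (φ u).2
  have hφφ : ⟪(φ u : H), φ v⟫ = ⟪(u : H), v⟫ := φ.inner_map_map u v
  rw [map_add_eq_sub hfix hneg v.2 (φ v).2, inner_add_left, inner_sub_right, inner_sub_right,
    huφv, hφuv, hφφ]
  ring

theorem exists_mem_ambientGraph_add_map_eq (hfix : ∀ u ∈ U₀, ε u = u)
    (hneg : ∀ u ∈ U₁, ε u = -u) (φ : U₀ ≃ₗ[ℝ] U₁) {x : H} (hx : x ∈ U₀ ⊔ U₁) :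
    ∃ a ∈ φ.toLinearMap.ambientGraph, ∃ b ∈ φ.toLinearMap.ambientGraph, x = a + ε b := by
  obtain ⟨u, hu, v, hv, rfl⟩ := Submodule.mem_sup.1 hx
  -- `u + v = (s + φ s) + ε (d + φ d)`, with `s`, `d` half the sum and difference of `u`, `φ⁻¹ v`
  set w := φ.symm ⟨v, hv⟩
  have hφw : (φ w : H) = v := by simp [w]
  set s : U₀ := (2⁻¹ : ℝ) • (⟨u, hu⟩ + w)
  set d : U₀ := (2⁻¹ : ℝ) • (⟨u, hu⟩ - w)
  refine ⟨_, φ.toLinearMap.add_mem_ambientGraph s, _, φ.toLinearMap.add_mem_ambientGraph d, ?_⟩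
  rw [φ.coe_coe, map_add_eq_sub hfix hneg d.2 (φ d).2]
  simp only [s, d, map_smul, map_add, map_sub, Submodule.coe_smul,
    Submodule.coe_add, Submodule.coe_sub, hφw]
  module

end Grading

section Transversal

variable {H : Type*} [NormedAddCommGroup H] [InnerProductSpace ℝ H] {ε : H ≃ₗᵢ[ℝ] H}
  {U₀ U₁ A : Submodule ℝ H}

theorem inner_add_map_add_map {a b : H} (hab : ⟪a, ε b⟫ = 0) (hba : ⟪b, ε a⟫ = 0) :
    ⟪a + ε a, b + ε b⟫ = 2 * ⟪a, b⟫ := by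
  rw [inner_add_left, inner_add_right, inner_add_right, real_inner_comm b (ε a), hab, hba,
    ε.inner_map_map]
  ring

theorem inner_sub_map_sub_map {a b : H} (hab : ⟪a, ε b⟫ = 0) (hba : ⟪b, ε a⟫ = 0) :
    ⟪a - ε a, b - ε b⟫ = 2 * ⟪a, b⟫ := by
  rw [inner_sub_left, inner_sub_right, inner_sub_right, real_inner_comm b (ε a), hab, hba,
    ε.inner_map_map]
  ring

theorem injective_of_inner_map_map_eq_mul {E F : Type*} [NormedAddCommGroup E]
    [InnerProductSpace ℝ E] [NormedAddCommGroup F] [InnerProductSpace ℝ F] (f : E →ₗ[ℝ] F)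
    {c : ℝ} (hc : c ≠ 0) (h : ∀ x, ⟪f x, f x⟫ = c * ⟪x, x⟫) : Function.Injective f := by
  refine (injective_iff_map_eq_zero f).2 fun x hx => ?_
  have := h x
  rw [hx, inner_zero_left, zero_eq_mul] at this
  exact inner_self_eq_zero.1 (this.resolve_left hc)

noncomputable section

def evenPart (hfix : ∀ u ∈ U₀, ε u = u) (hneg : ∀ u ∈ U₁, ε u = -u) (hle : A ≤ U₀ ⊔ U₁) :
    A →ₗ[ℝ] U₀ :=
  LinearMap.codRestrict U₀ ((2⁻¹ : ℝ) • (A.subtype + ε.toLinearMap ∘ₗ A.subtype)) fun a =>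
    U₀.smul_mem _ (add_map_mem_of_mem_sup hfix hneg (hle a.2))

def oddPart (hfix : ∀ u ∈ U₀, ε u = u) (hneg : ∀ u ∈ U₁, ε u = -u) (hle : A ≤ U₀ ⊔ U₁) :
    A →ₗ[ℝ] U₁ :=
  LinearMap.codRestrict U₁ ((2⁻¹ : ℝ) • (A.subtype - ε.toLinearMap ∘ₗ A.subtype)) fun a =>
    U₁.smul_mem _ (sub_map_mem_of_mem_sup hfix hneg (hle a.2))

end

section Parts

variable (hfix : ∀ u ∈ U₀, ε u = u) (hneg : ∀ u ∈ U₁, ε u = -u) (hle : A ≤ U₀ ⊔ U₁)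

theorem coe_evenPart (a : A) : (evenPart hfix hneg hle a : H) = (2⁻¹ : ℝ) • ((a : H) + ε a) :=
  rfl

theorem coe_oddPart (a : A) : (oddPart hfix hneg hle a : H) = (2⁻¹ : ℝ) • ((a : H) - ε a) :=
  rfl

theorem evenPart_add_oddPart (a : A) :
    (evenPart hfix hneg hle a : H) + oddPart hfix hneg hle a = a := by
  rw [coe_evenPart, coe_oddPart]
  module

theorem inner_evenPart (horth : ∀ a ∈ A, ∀ b ∈ A, ⟪a, ε b⟫ = 0) (a b : A) :
    ⟪evenPart hfix hneg hle a, evenPart hfix hneg hle b⟫ = 2⁻¹ * ⟪a, b⟫ := by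
  rw [Submodule.coe_inner, Submodule.coe_inner, coe_evenPart, coe_evenPart, real_inner_smul_left,
    real_inner_smul_right, inner_add_map_add_map (horth a a.2 b b.2) (horth b b.2 a a.2)]
  ring

theorem inner_oddPart (horth : ∀ a ∈ A, ∀ b ∈ A, ⟪a, ε b⟫ = 0) (a b : A) :
    ⟪oddPart hfix hneg hle a, oddPart hfix hneg hle b⟫ = 2⁻¹ * ⟪a, b⟫ := by
  rw [Submodule.coe_inner, Submodule.coe_inner, coe_oddPart, coe_oddPart, real_inner_smul_left,
    real_inner_smul_right, inner_sub_map_sub_map (horth a a.2 b b.2) (horth b b.2 a a.2)]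
  ring

theorem evenPart_surjective (hspan : ∀ x ∈ U₀ ⊔ U₁, ∃ a ∈ A, ∃ b ∈ A, x = a + ε b) :
    Function.Surjective (evenPart hfix hneg hle) := by
  intro u
  obtain ⟨a, ha, b, hb, hu⟩ := hspan u (Submodule.mem_sup_left u.2)
  -- applying `ε` to `u = a + ε b` gives `u = ε a + b`
  have hu' : (u : H) = ε a + b := by
    rw [← hfix u u.2, hu, map_add, map_map_of_mem_sup hfix hneg (hle hb)]
  refine ⟨⟨a + b, add_mem ha hb⟩, Subtype.ext ?_⟩
  rw [coe_evenPart, Submodule.coe_mk, map_add]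
  linear_combination (norm := module) (-2⁻¹ : ℝ) • (hu + hu')

theorem oddPart_surjective (hspan : ∀ x ∈ U₀ ⊔ U₁, ∃ a ∈ A, ∃ b ∈ A, x = a + ε b) :
    Function.Surjective (oddPart hfix hneg hle) := by
  intro v
  obtain ⟨a, ha, b, hb, hv⟩ := hspan v (Submodule.mem_sup_right v.2)
  -- applying `ε` to `v = a + ε b` gives `-v = ε a + b`
  have hv' : -(v : H) = ε a + b := by
    rw [← hneg v v.2, hv, map_add, map_map_of_mem_sup hfix hneg (hle hb)]
  refine ⟨⟨a - b, sub_mem ha hb⟩, Subtype.ext ?_⟩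
  rw [coe_oddPart, Submodule.coe_mk, map_sub]
  linear_combination (norm := module) (-2⁻¹ : ℝ) • (hv - hv')

end Parts

theorem exists_linearIsometryEquiv_ambientGraph_eq (hfix : ∀ u ∈ U₀, ε u = u)
    (hneg : ∀ u ∈ U₁, ε u = -u) (hle : A ≤ U₀ ⊔ U₁) (horth : ∀ a ∈ A, ∀ b ∈ A, ⟪a, ε b⟫ = 0)
    (hspan : ∀ x ∈ U₀ ⊔ U₁, ∃ a ∈ A, ∃ b ∈ A, x = a + ε b) :
    ∃ φ : U₀ ≃ₗᵢ[ℝ] U₁, φ.toLinearEquiv.toLinearMap.ambientGraph = A := by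
  let p := LinearEquiv.ofBijective (evenPart hfix hneg hle)
    ⟨injective_of_inner_map_map_eq_mul _ (by norm_num)
      (fun a => inner_evenPart hfix hneg hle horth a a), evenPart_surjective hfix hneg hle hspan⟩
  let q := LinearEquiv.ofBijective (oddPart hfix hneg hle)
    ⟨injective_of_inner_map_map_eq_mul _ (by norm_num)
      (fun a => inner_oddPart hfix hneg hle horth a a), oddPart_surjective hfix hneg hle hspan⟩
  have hinner (x y : U₀) : ⟪p.symm.trans q x, p.symm.trans q y⟫ = ⟪x, y⟫ := by
    conv_rhs => rw [← p.apply_symm_apply x, ← p.apply_symm_apply y]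
    exact (inner_oddPart hfix hneg hle horth _ _).trans
      (inner_evenPart hfix hneg hle horth _ _).symm
  refine ⟨(p.symm.trans q).isometryOfInner hinner, ?_⟩
  rw [LinearEquiv.isometryOfInner_toLinearEquiv, LinearEquiv.coe_trans]
  exact LinearMap.ambientGraph_comp_symm p q.toLinearMap (evenPart_add_oddPart hfix hneg hle)

end Transversal

theorem graphs_of_isometries_are_transversal_subspaces_general
    {H : Type*} [NormedAddCommGroup H] [InnerProductSpace ℝ H]
    (ε : H ≃ₗᵢ[ℝ] H)
    (U₀ U₁ : Submodule ℝ H)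
    (hfix : ∀ u ∈ U₀, ε u = u)
    (hneg : ∀ u ∈ U₁, ε u = -u)
    (hperp : ∀ u ∈ U₀, ∀ v ∈ U₁, (inner ℝ u v : ℝ) = 0) :
    let Graph : (U₀ ≃ₗᵢ[ℝ] U₁) → Submodule ℝ H := fun φ =>
      LinearMap.range (U₀.subtype + U₁.subtype ∘ₗ φ.toLinearEquiv.toLinearMap)
    let Good : Submodule ℝ H → Prop := fun A =>
      A ≤ U₀ ⊔ U₁ ∧
      (∀ a ∈ A, ∀ b ∈ A, (inner ℝ a (ε b) : ℝ) = 0) ∧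
      (∀ x ∈ U₀ ⊔ U₁, ∃ a ∈ A, ∃ b ∈ A, x = a + ε b)
    -- `φ ↦ A_φ` lands in the good subspaces,
    (∀ φ : U₀ ≃ₗᵢ[ℝ] U₁, Good (Graph φ)) ∧
    -- it is a bijection onto them (the inverse being `A ↦ φ_A`),
    (∀ A : Submodule ℝ H, Good A → ∃! φ : U₀ ≃ₗᵢ[ℝ] U₁, Graph φ = A) ∧
    -- and for `a = u + φ(u) ∈ A_φ` one has `a + εa = 2u`, `a − εa = 2φ(u)`,
    -- i.e. `φ_{A_φ}(a + εa) = a − εa` recovers `φ`.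
    (∀ (φ : U₀ ≃ₗᵢ[ℝ] U₁) (u : U₀),
      ((u : H) + (φ u : H)) + ε ((u : H) + (φ u : H)) = (2 : ℝ) • (u : H) ∧
      ((u : H) + (φ u : H)) - ε ((u : H) + (φ u : H)) = (2 : ℝ) • (φ u : H)) := by
  intro Graph Good
  have hortho : U₀ ⟂ U₁ := Submodule.isOrtho_iff_inner_eq.2 hperp
  refine ⟨fun φ => ⟨LinearMap.ambientGraph_le_sup _, fun a ha b hb => ?_, fun x hx => ?_⟩,
    fun A ⟨hle, horth, hspan⟩ => ?_, fun φ u => ?_⟩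
  · exact inner_map_ambientGraph_eq_zero hfix hneg hortho φ.toLinearIsometry ha hb
  · exact exists_mem_ambientGraph_add_map_eq hfix hneg φ.toLinearEquiv hx
  · obtain ⟨φ, hφ⟩ := exists_linearIsometryEquiv_ambientGraph_eq hfix hneg hle horth hspan
    refine ⟨φ, hφ, fun ψ hψ => ?_⟩
    have h := LinearMap.ambientGraph_injective hortho.disjoint (hψ.trans hφ.symm)
    exact LinearIsometryEquiv.toLinearEquiv_injective (LinearEquiv.toLinearMap_injective h)
  · rw [map_add_eq_sub hfix hneg u.2 (φ u).2]
    constructor <;> module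

/-- Graphs of isometries vs. Lagrangian-type subspaces: for finite-dimensional
`U⁰ ⊆ H^even`, `U¹ ⊆ H^odd` with `U⁰ ⊥ U¹`, the assignment
`φ ↦ A_φ = {u + φ(u)}` is a bijection (with inverse `A ↦ φ_A`,
`φ_A(a + εa) = a − εa`) between isometric isomorphisms `φ : U⁰ → U¹` and
subspaces `A ⊆ U⁰ ⊕ U¹` with `A ⊥ εA` and `U⁰ ⊕ U¹ = A ⊕ εA`. -/
theorem graphs_of_isometries_are_transversal_subspaces
    {H : Type*} [NormedAddCommGroup H] [InnerProductSpace ℝ H]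
    (ε : H ≃ₗᵢ[ℝ] H) (hinv : ∀ x, ε (ε x) = x)
    (U₀ U₁ : Submodule ℝ H)
    [FiniteDimensional ℝ U₀] [FiniteDimensional ℝ U₁]
    (hfix : ∀ u ∈ U₀, ε u = u)
    (hneg : ∀ u ∈ U₁, ε u = -u)
    (hperp : ∀ u ∈ U₀, ∀ v ∈ U₁, (inner ℝ u v : ℝ) = 0) :
    let Graph : (U₀ ≃ₗᵢ[ℝ] U₁) → Submodule ℝ H := fun φ =>
      LinearMap.range (U₀.subtype + U₁.subtype ∘ₗ φ.toLinearEquiv.toLinearMap)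
    let Good : Submodule ℝ H → Prop := fun A =>
      A ≤ U₀ ⊔ U₁ ∧
      (∀ a ∈ A, ∀ b ∈ A, (inner ℝ a (ε b) : ℝ) = 0) ∧
      (∀ x ∈ U₀ ⊔ U₁, ∃ a ∈ A, ∃ b ∈ A, x = a + ε b)
    -- `φ ↦ A_φ` lands in the good subspaces,
    (∀ φ : U₀ ≃ₗᵢ[ℝ] U₁, Good (Graph φ)) ∧
    -- it is a bijection onto them (the inverse being `A ↦ φ_A`),
    (∀ A : Submodule ℝ H, Good A → ∃! φ : U₀ ≃ₗᵢ[ℝ] U₁, Graph φ = A) ∧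
    -- and for `a = u + φ(u) ∈ A_φ` one has `a + εa = 2u`, `a − εa = 2φ(u)`,
    -- i.e. `φ_{A_φ}(a + εa) = a − εa` recovers `φ`.
    (∀ (φ : U₀ ≃ₗᵢ[ℝ] U₁) (u : U₀),
      ((u : H) + (φ u : H)) + ε ((u : H) + (φ u : H)) = (2 : ℝ) • (u : H) ∧
      ((u : H) + (φ u : H)) - ε ((u : H) + (φ u : H)) = (2 : ℝ) • (φ u : H)) :=
  graphs_of_isometries_are_transversal_subspaces_general ε U₀ U₁ hfix hneg hperp
end
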